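/- Let μ be a finite nonnegative measure on the unit circle with infinite support, P_n a paraorthogonal polynomial of degree n ≥ 2 for μ, and ξ, ζ two distinct zeros of P_n (both on the unit circle). Then ∫ e^{iθ}/((e^{iθ} − ξ)(e^{iθ} − ζ)) · |P_n(e^{iθ})|² dμ(θ) = 0. -/

import Mathlib

open Real Complex MeasureTheory Polynomial

noncomputable def pbnd (p : Polynomial ℂ) : ℝ :=
  ∑ i ∈ Finset.range (p.natDegree + 1), ‖p.coeff i‖

lemma eval_norm_le (p : Polynomial ℂ) {z : ℂ} (hz : ‖z‖ = 1) : ‖p.eval z‖ ≤ pbnd p := by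
  rw [Polynomial.eval_eq_sum_range]
  refine (norm_sum_le _ _).trans ?_
  apply Finset.sum_le_sum
  intro i _
  rw [norm_mul, norm_pow, hz, one_pow, mul_one]

lemma cont_eval (p : Polynomial ℂ) :
    Continuous fun θ : ℝ => p.eval (Complex.exp (θ * Complex.I)) :=
  p.continuous.comp (Complex.continuous_exp.comp (by continuity))

lemma norm_exp_one (θ : ℝ) : ‖Complex.exp (θ * Complex.I)‖ = 1 := by
  rw [Complex.norm_exp_ofReal_mul_I]

lemma integ_pq (μ : Measure ℝ) [IsFiniteMeasure μ] (p q : Polynomial ℂ) :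
    Integrable (fun θ : ℝ => p.eval (Complex.exp (θ * Complex.I)) *
      (starRingEnd ℂ) (q.eval (Complex.exp (θ * Complex.I)))) μ := by
  refine ⟨(((cont_eval p).mul (Complex.continuous_conj.comp (cont_eval q)))).aestronglyMeasurable,
    HasFiniteIntegral.of_bounded (C := pbnd p * pbnd q) (ae_of_all μ fun x => ?_)⟩
  rw [norm_mul, RCLike.norm_conj]
  exact mul_le_mul (eval_norm_le p (norm_exp_one x)) (eval_norm_le q (norm_exp_one x))
    (norm_nonneg _) ((norm_nonneg _).trans (eval_norm_le p (norm_exp_one x)))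

/-- Orthogonality of `Q m` to all polynomials of degree `< m`. -/
lemma orth_lower (μ : Measure ℝ) [IsFiniteMeasure μ] (Q : ℕ → Polynomial ℂ)
    (hmonic : ∀ k, (Q k).Monic) (hdeg : ∀ k, (Q k).natDegree = k)
    (horth : ∀ k m, k ≠ m →
      ∫ θ, (Q k).eval (Complex.exp (θ * Complex.I)) *
        (starRingEnd ℂ) ((Q m).eval (Complex.exp (θ * Complex.I))) ∂μ = 0)
    (m : ℕ) :
    ∀ k, ∀ S : Polynomial ℂ, S.natDegree ≤ k → k < m →
      ∫ θ, (Q m).eval (Complex.exp (θ * Complex.I)) *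
        (starRingEnd ℂ) (S.eval (Complex.exp (θ * Complex.I))) ∂μ = 0 := by
  intro k
  induction k with
  | zero =>
    intro S hS hm
    have hQ0 : Q 0 = 1 :=
      (Polynomial.Monic.natDegree_eq_zero (hmonic 0)).mp (hdeg 0)
    have hSC : S = Polynomial.C (S.coeff 0) := Polynomial.eq_C_of_natDegree_le_zero hS
    have key := horth m 0 (by omega)
    calc ∫ θ, (Q m).eval (Complex.exp (θ * Complex.I)) *
          (starRingEnd ℂ) (S.eval (Complex.exp (θ * Complex.I))) ∂μ
        = ∫ θ, (starRingEnd ℂ) (S.coeff 0) • ((Q m).eval (Complex.exp (θ * Complex.I)) *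
            (starRingEnd ℂ) ((Q 0).eval (Complex.exp (θ * Complex.I)))) ∂μ := by
          congr 1; funext θ
          rw [hQ0]; nth_rewrite 1 [hSC]
          simp [smul_eq_mul]; ring
      _ = (starRingEnd ℂ) (S.coeff 0) • ∫ θ, (Q m).eval (Complex.exp (θ * Complex.I)) *
            (starRingEnd ℂ) ((Q 0).eval (Complex.exp (θ * Complex.I))) ∂μ := integral_smul _ _
      _ = 0 := by rw [key, smul_zero]
  | succ k ih =>
    intro S hS hm
    set c := S.coeff (k + 1) with hc
    set S' := S - Polynomial.C c * Q (k + 1) with hS'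
    have hdegS' : S'.natDegree ≤ k := by
      rw [Polynomial.natDegree_le_iff_coeff_eq_zero]
      intro j hj
      rw [hS', Polynomial.coeff_sub, Polynomial.coeff_C_mul]
      rcases eq_or_lt_of_le (Nat.succ_le_of_lt hj) with h | h
      · have : (Q (k+1)).coeff (k+1) = 1 := by
          have := (hmonic (k+1)).coeff_natDegree
          rwa [hdeg (k+1)] at this
        rw [← h, this, mul_one, sub_self]
      · have h1 : S.coeff j = 0 := Polynomial.coeff_eq_zero_of_natDegree_lt (by omega)
        have h2 : (Q (k+1)).coeff j = 0 :=
          Polynomial.coeff_eq_zero_of_natDegree_lt (by rw [hdeg]; omega)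
        rw [h1, h2, mul_zero, sub_zero]
    have hSplit : S = S' + Polynomial.C c * Q (k + 1) := by rw [hS']; ring
    have key := horth m (k+1) (by omega)
    have ihS' := ih S' hdegS' (by omega)
    calc ∫ θ, (Q m).eval (Complex.exp (θ * Complex.I)) *
          (starRingEnd ℂ) (S.eval (Complex.exp (θ * Complex.I))) ∂μ
        = ∫ θ, ((Q m).eval (Complex.exp (θ * Complex.I)) *
            (starRingEnd ℂ) (S'.eval (Complex.exp (θ * Complex.I))) +
            (starRingEnd ℂ) c * ((Q m).eval (Complex.exp (θ * Complex.I)) *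
            (starRingEnd ℂ) ((Q (k+1)).eval (Complex.exp (θ * Complex.I))))) ∂μ := by
          congr 1; funext θ
          nth_rewrite 1 [hSplit]
          simp; ring
      _ = (∫ θ, (Q m).eval (Complex.exp (θ * Complex.I)) *
            (starRingEnd ℂ) (S'.eval (Complex.exp (θ * Complex.I))) ∂μ) +
          ∫ θ, (starRingEnd ℂ) c * ((Q m).eval (Complex.exp (θ * Complex.I)) *
            (starRingEnd ℂ) ((Q (k+1)).eval (Complex.exp (θ * Complex.I)))) ∂μ := by
          exact integral_add (integ_pq μ _ _) ((integ_pq μ (Q m) (Q (k+1))).const_mul _)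
      _ = 0 := by rw [ihS', integral_const_mul, key, mul_zero, zero_add]

lemma orth_lower' (μ : Measure ℝ) [IsFiniteMeasure μ] (Q : ℕ → Polynomial ℂ)
    (hmonic : ∀ k, (Q k).Monic) (hdeg : ∀ k, (Q k).natDegree = k)
    (horth : ∀ k m, k ≠ m →
      ∫ θ, (Q k).eval (Complex.exp (θ * Complex.I)) *
        (starRingEnd ℂ) ((Q m).eval (Complex.exp (θ * Complex.I))) ∂μ = 0)
    (m k : ℕ) (S : Polynomial ℂ) (hS : S.natDegree ≤ k) (hk : k < m) :
    ∫ θ, S.eval (Complex.exp (θ * Complex.I)) *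
      (starRingEnd ℂ) ((Q m).eval (Complex.exp (θ * Complex.I))) ∂μ = 0 := by
  have h := orth_lower μ Q hmonic hdeg horth m k S hS hk
  have : ∫ θ, S.eval (Complex.exp (θ * Complex.I)) *
      (starRingEnd ℂ) ((Q m).eval (Complex.exp (θ * Complex.I))) ∂μ =
      (starRingEnd ℂ) (∫ θ, (Q m).eval (Complex.exp (θ * Complex.I)) *
      (starRingEnd ℂ) (S.eval (Complex.exp (θ * Complex.I))) ∂μ) := by
    rw [← integral_conj]
    congr 1; funext θ
    simp [mul_comm]
  rw [this, h, map_zero]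

/-- eval of reverse at a nonzero point. -/
lemma eval_reverse (p : Polynomial ℂ) {z : ℂ} (hz : z ≠ 0) :
    p.reverse.eval z = z ^ p.natDegree * p.eval z⁻¹ := by
  have : Invertible z⁻¹ := invertibleOfNonzero (inv_ne_zero hz)
  have h := Polynomial.eval₂_reverse_mul_pow (RingHom.id ℂ) z⁻¹ p
  rw [invOf_eq_inv, inv_inv] at h
  rw [← Polynomial.eval] at *
  have h' : p.reverse.eval z * (z⁻¹) ^ p.natDegree = p.eval z⁻¹ := h
  rw [← h', mul_left_comm, ← mul_pow, mul_inv_cancel₀ hz, one_pow, mul_one]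

theorem stmt_13 (μ : Measure ℝ) [IsFiniteMeasure μ]
    (hsupp : μ (Set.Ico 0 (2 * π))ᶜ = 0)
    (hinf : ∀ s : Finset ℝ, μ ((↑s : Set ℝ))ᶜ ≠ 0)
    (Q : ℕ → Polynomial ℂ)
    (hmonic : ∀ k, (Q k).Monic) (hdeg : ∀ k, (Q k).natDegree = k)
    (horth : ∀ k m, k ≠ m →
      ∫ θ, (Q k).eval (Complex.exp (θ * Complex.I)) *
        (starRingEnd ℂ) ((Q m).eval (Complex.exp (θ * Complex.I))) ∂μ = 0)
    (hnorm : ∀ k, ∫ θ, ‖(Q k).eval (Complex.exp (θ * Complex.I))‖ ^ 2 ∂μ ≠ 0)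
    (n : ℕ) (hn : 2 ≤ n) (b : ℂ) (hb : ‖b‖ = 1)
    (P : Polynomial ℂ)
    (hP : P = Polynomial.X * Q (n - 1) -
      Polynomial.C ((starRingEnd ℂ) b) * ((Q (n - 1)).map (starRingEnd ℂ)).reverse)
    (ξ ζ : ℂ) (hξ : ‖ξ‖ = 1) (hζ : ‖ζ‖ = 1) (hne : ξ ≠ ζ)
    (hPξ : P.eval ξ = 0) (hPζ : P.eval ζ = 0) :
    ∫ θ, Complex.exp (θ * Complex.I) /
        ((Complex.exp (θ * Complex.I) - ξ) * (Complex.exp (θ * Complex.I) - ζ)) *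
        ((‖P.eval (Complex.exp (θ * Complex.I))‖ ^ 2 : ℝ) : ℂ) ∂μ = 0 := by
  obtain ⟨m, rfl⟩ : ∃ m, n = m + 2 := ⟨n - 2, by omega⟩
  have hn1 : m + 2 - 1 = m + 1 := rfl
  rw [hn1] at hP
  set Q1 := Q (m + 1) with hQ1
  -- factor P
  have hd1 : (Polynomial.X - Polynomial.C ξ) ∣ P := Polynomial.dvd_iff_isRoot.mpr hPξ
  obtain ⟨P1, hP1⟩ := hd1
  have hP1ζ : P1.eval ζ = 0 := by
    have h := hPζ
    rw [hP1, Polynomial.eval_mul, Polynomial.eval_sub, Polynomial.eval_X,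
      Polynomial.eval_C] at h
    exact (mul_eq_zero.mp h).resolve_left (sub_ne_zero.mpr (Ne.symm hne))
  obtain ⟨R, hR⟩ := Polynomial.dvd_iff_isRoot.mpr hP1ζ
  have hPfac : P = (Polynomial.X - Polynomial.C ξ) * ((Polynomial.X - Polynomial.C ζ) * R) := by
    rw [hP1, hR]
  -- degrees
  have hQdeg : Q1.natDegree = m + 1 := hdeg _
  have hQne : Q1 ≠ 0 := (hmonic _).ne_zero
  have hmapdeg : (Q1.map (starRingEnd ℂ)).natDegree = m + 1 := by
    rw [Polynomial.natDegree_map_eq_of_injective (starRingEnd ℂ).injective, hQdeg]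
  have hrevle : ((Q1.map (starRingEnd ℂ)).reverse).natDegree ≤ m + 1 :=
    hmapdeg ▸ Polynomial.reverse_natDegree_le _
  have hlt : (Polynomial.C ((starRingEnd ℂ) b) *
      ((Q1.map (starRingEnd ℂ)).reverse)).natDegree < (Polynomial.X * Q1).natDegree := by
    refine lt_of_le_of_lt ((Polynomial.natDegree_C_mul_le _ _).trans hrevle) ?_
    rw [Polynomial.natDegree_X_mul hQne, hQdeg]; omega
  have hPdeg : P.natDegree = m + 2 := by
    rw [hP, Polynomial.natDegree_sub_eq_left_of_natDegree_lt hlt,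
      Polynomial.natDegree_X_mul hQne, hQdeg]
  have hPne : P ≠ 0 := fun h => by simp [h] at hPdeg
  have hRne : R ≠ 0 := by
    intro h; rw [h, mul_zero, mul_zero] at hPfac; exact hPne hPfac
  have hRdeg : R.natDegree = m := by
    have h := hPdeg
    rw [hPfac, Polynomial.natDegree_mul (Polynomial.X_sub_C_ne_zero ξ)
      (mul_ne_zero (Polynomial.X_sub_C_ne_zero ζ) hRne),
      Polynomial.natDegree_mul (Polynomial.X_sub_C_ne_zero ζ) hRne,
      Polynomial.natDegree_X_sub_C, Polynomial.natDegree_X_sub_C] at h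
    omega
  set T := (R.map (starRingEnd ℂ)).reverse with hT
  have hRmapdeg : (R.map (starRingEnd ℂ)).natDegree = m := by
    rw [Polynomial.natDegree_map_eq_of_injective (starRingEnd ℂ).injective, hRdeg]
  have hTdeg : T.natDegree ≤ m := hRmapdeg ▸ Polynomial.reverse_natDegree_le _
  -- pointwise identity
  have hpt : ∀ θ : ℝ, Complex.exp (θ * Complex.I) /
        ((Complex.exp (θ * Complex.I) - ξ) * (Complex.exp (θ * Complex.I) - ζ)) *
        ((‖P.eval (Complex.exp (θ * Complex.I))‖ ^ 2 : ℝ) : ℂ) =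
      R.eval (Complex.exp (θ * Complex.I)) *
        (starRingEnd ℂ) (Q1.eval (Complex.exp (θ * Complex.I))) -
      b * (Q1.eval (Complex.exp (θ * Complex.I)) *
        (starRingEnd ℂ) (T.eval (Complex.exp (θ * Complex.I)))) := by
    intro θ
    set z := Complex.exp (θ * Complex.I) with hzdef
    have hzn : ‖z‖ = 1 := norm_exp_one θ
    have hz0 : z ≠ 0 := Complex.exp_ne_zero _
    have hcz : z * (starRingEnd ℂ) z = 1 := by
      rw [Complex.mul_conj, ← Complex.sq_norm, hzn]
      norm_num
    have hinv : z⁻¹ = (starRingEnd ℂ) z := inv_eq_of_mul_eq_one_right hcz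
    have hnormsq : ((‖P.eval z‖ ^ 2 : ℝ) : ℂ) = P.eval z * (starRingEnd ℂ) (P.eval z) := by
      rw [Complex.mul_conj, ← Complex.sq_norm]
    -- step A
    have stepA : z / ((z - ξ) * (z - ζ)) * ((‖P.eval z‖ ^ 2 : ℝ) : ℂ) =
        z * R.eval z * (starRingEnd ℂ) (P.eval z) := by
      rw [hnormsq]
      by_cases h1 : z = ξ
      · have : P.eval z = 0 := by
          rw [hPfac]; simp [h1]
        rw [this]; simp
      by_cases h2 : z = ζ
      · have : P.eval z = 0 := by
          rw [hPfac]; simp [h2]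
        rw [this]; simp
      · have h1' : z - ξ ≠ 0 := sub_ne_zero.mpr h1
        have h2' : z - ζ ≠ 0 := sub_ne_zero.mpr h2
        nth_rewrite 1 [hPfac]
        simp only [Polynomial.eval_mul, Polynomial.eval_sub, Polynomial.eval_X,
          Polynomial.eval_C]
        field_simp
    rw [stepA]
    -- evaluate the reversals
    have hRev : ((Q1.map (starRingEnd ℂ)).reverse).eval z =
        z ^ (m + 1) * (starRingEnd ℂ) (Q1.eval z) := by
      rw [eval_reverse _ hz0, hmapdeg, hinv, Polynomial.eval_map,
        Polynomial.eval₂_at_apply]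
    have hTev : T.eval z = z ^ m * (starRingEnd ℂ) (R.eval z) := by
      rw [hT, eval_reverse _ hz0, hRmapdeg, hinv, Polynomial.eval_map,
        Polynomial.eval₂_at_apply]
    have hPev : (starRingEnd ℂ) (P.eval z) =
        (starRingEnd ℂ) z * (starRingEnd ℂ) (Q1.eval z) -
        b * ((starRingEnd ℂ) z) ^ (m + 1) * Q1.eval z := by
      rw [hP]
      simp only [Polynomial.eval_sub, Polynomial.eval_mul, Polynomial.eval_X,
        Polynomial.eval_C, hRev, map_sub, map_mul, map_pow]
      simp [Complex.conj_conj]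
      ring
    rw [hPev, hTev]
    simp only [map_mul, map_pow, Complex.conj_conj]
    linear_combination (R.eval z * (starRingEnd ℂ) (Q1.eval z) -
      b * R.eval z * Q1.eval z * ((starRingEnd ℂ) z) ^ m) * hcz
  calc ∫ θ, Complex.exp (θ * Complex.I) /
        ((Complex.exp (θ * Complex.I) - ξ) * (Complex.exp (θ * Complex.I) - ζ)) *
        ((‖P.eval (Complex.exp (θ * Complex.I))‖ ^ 2 : ℝ) : ℂ) ∂μ
      = ∫ θ, (R.eval (Complex.exp (θ * Complex.I)) *
          (starRingEnd ℂ) (Q1.eval (Complex.exp (θ * Complex.I))) -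
          b * (Q1.eval (Complex.exp (θ * Complex.I)) *
          (starRingEnd ℂ) (T.eval (Complex.exp (θ * Complex.I))))) ∂μ := by
        congr 1; funext θ; exact hpt θ
    _ = (∫ θ, R.eval (Complex.exp (θ * Complex.I)) *
          (starRingEnd ℂ) (Q1.eval (Complex.exp (θ * Complex.I))) ∂μ) -
        ∫ θ, b * (Q1.eval (Complex.exp (θ * Complex.I)) *
          (starRingEnd ℂ) (T.eval (Complex.exp (θ * Complex.I)))) ∂μ :=
        integral_sub (integ_pq μ R Q1) ((integ_pq μ Q1 T).const_mul b)
    _ = 0 := by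
        rw [orth_lower' μ Q hmonic hdeg horth (m+1) m R (le_of_eq hRdeg) (by omega),
          integral_const_mul,
          orth_lower μ Q hmonic hdeg horth (m+1) m T hTdeg (by omega)]
        simp
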